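/- arXiv:2208.07542 — 4 statements merged into one kernel-verified Lean document; each statement's English description precedes it below -/
import Mathlib

section
/- Let T⁺ = T ∩ {x₂ ≥ 0} and T⁻ = T ∩ {x₂ ≤ 0} be the two pieces of a polygon T cut by the x-axis, and let β⁺, β⁻ > 0. The space of piecewise linear functions q on T with q linear on T⁺ and on T⁻, continuous across the x-axis, and with β⁺ ∂q/∂y on T⁺ equal to β⁻ ∂q/∂y on T⁻ along the cut, has dimension 3. -/
/-!
Broken linear functions on a polygon `T ⊂ ℝ²` cut by the x-axis into
`T⁺ = T ∩ {x₂ ≥ 0}` and `T⁻ = T ∩ {x₂ ≤ 0}`.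
A broken linear function is a pair of affine functions
`q⁺(x,y) = a⁺ + b⁺ x + c⁺ y` on `T⁺` and `q⁻(x,y) = a⁻ + b⁻ x + c⁻ y` on `T⁻`,
encoded by its coefficient pair `((a⁺,b⁺,c⁺),(a⁻,b⁻,c⁻)) ∈ (ℝ×ℝ×ℝ)×(ℝ×ℝ×ℝ)`,
satisfying continuity across the cut line `{x₂ = 0}` (i.e. `q⁺(x,0) = q⁻(x,0)`
for all `x`) and the flux condition `β⁺ ∂q⁺/∂y = β⁻ ∂q⁻/∂y` along the cut
(the normal is `n = (0,-1)`, so this is `β⁺ c⁺ = β⁻ c⁻`).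
-/

/-- The space of broken linear functions (coefficient representation). -/
def brokenSpace (βp βm : ℝ) : Submodule ℝ ((ℝ × ℝ × ℝ) × (ℝ × ℝ × ℝ)) where
  carrier := {p | (∀ x : ℝ, p.1.1 + p.1.2.1 * x = p.2.1 + p.2.2.1 * x) ∧
      βp * p.1.2.2 = βm * p.2.2.2}
  add_mem' := by
    rintro a b ⟨ha1, ha2⟩ ⟨hb1, hb2⟩
    refine ⟨fun x => ?_, ?_⟩
    · have h1 := ha1 x; have h2 := hb1 x
      simp only [Prod.fst_add, Prod.snd_add] at *
      ring_nf
      ring_nf at h1 h2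
      linarith
    · simp only [Prod.fst_add, Prod.snd_add] at *
      ring_nf
      ring_nf at ha2 hb2
      linarith
  zero_mem' := by simp
  smul_mem' := by
    rintro r a ⟨ha1, ha2⟩
    refine ⟨fun x => ?_, ?_⟩
    · have h1 := ha1 x
      simp only [Prod.smul_fst, Prod.smul_snd, smul_eq_mul] at *
      linear_combination r * h1
    · simp only [Prod.smul_fst, Prod.smul_snd, smul_eq_mul] at *
      linear_combination r * ha2

theorem affine_eq_affine_iff {a b a' b' : ℝ} :
    (∀ x : ℝ, a + b * x = a' + b' * x) ↔ a = a' ∧ b = b' := by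
  refine ⟨fun h => ?_, fun ⟨ha, hb⟩ x => by rw [ha, hb]⟩
  have h₀ := h 0
  have h₁ := h 1
  simp only [mul_zero, add_zero, mul_one] at h₀ h₁
  exact ⟨h₀, by linarith⟩

/-- The jumps across the cut of the value at `x = 0`, of the slope along the cut, and of the
scaled normal derivative. -/
def cutJump (βp βm : ℝ) : (ℝ × ℝ × ℝ) × (ℝ × ℝ × ℝ) →ₗ[ℝ] ℝ × ℝ × ℝ where
  toFun p := (p.1.1 - p.2.1, p.1.2.1 - p.2.2.1, βp * p.1.2.2 - βm * p.2.2.2)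
  map_add' p q := by ext <;> simp only [Prod.fst_add, Prod.snd_add] <;> ring
  map_smul' r p := by ext <;> simp only [Prod.smul_fst, Prod.smul_snd, smul_eq_mul,
    RingHom.id_apply] <;> ring

theorem brokenSpace_eq_ker_cutJump (βp βm : ℝ) :
    brokenSpace βp βm = LinearMap.ker (cutJump βp βm) := by
  ext ⟨⟨a, b, c⟩, ⟨a', b', c'⟩⟩
  simp only [brokenSpace, Submodule.mem_mk, AddSubmonoid.mem_mk, AddSubsemigroup.mem_mk,
    Set.mem_ofPred_eq, LinearMap.mem_ker, cutJump, LinearMap.coe_mk, AddHom.coe_mk,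
    affine_eq_affine_iff, Prod.mk_eq_zero, sub_eq_zero, and_assoc]

theorem cutJump_surjective (βp : ℝ) {βm : ℝ} (hβm : βm ≠ 0) :
    Function.Surjective (cutJump βp βm) := fun ⟨u, v, w⟩ =>
  ⟨((u, v, 0), (0, 0, -w / βm)), by simp [cutJump, field]⟩

theorem brokenSpace_finrank_eq_three_general (βp βm : ℝ) (hβm : 0 < βm) :
    Module.finrank ℝ (brokenSpace βp βm) = 3 := by
  have h := LinearMap.finrank_range_add_finrank_ker (cutJump βp βm)
  rw [LinearMap.range_eq_top.mpr (cutJump_surjective βp hβm.ne'), finrank_top] at h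
  simp only [Module.finrank_prod, Module.finrank_self] at h
  rw [brokenSpace_eq_ker_cutJump]
  omega

/-- The space of piecewise linear functions on `T`, linear on
each of `T⁺`, `T⁻`, continuous across the x-axis and with matching scaled normal
derivative `β⁺ ∂q⁺/∂y = β⁻ ∂q⁻/∂y` along the cut, has dimension 3. -/
theorem brokenSpace_finrank_eq_three (βp βm : ℝ) (hβp : 0 < βp) (hβm : 0 < βm) :
    Module.finrank ℝ (brokenSpace βp βm) = 3 :=
  brokenSpace_finrank_eq_three_general βp βm hβm
end

section
/- Suppose a convex-shaped region T is star-shaped with respect to a ball B of radius ρ h_T centered at x_T = (x_T', y_T), where T is cut by the x-axis into T⁺ = T ∩ {y ≥ 0} and T⁻ = T ∩ {y ≤ 0}. Then either T⁺ or T⁻ contains a ball of radius ρ h_T / 8. Specifically, if y_T ≥ −ρ h_T/8 then the ball of radius ρ h_T/8 centered at (x_T', y_T + ρ h_T/2) is contained in B ∩ T⁺, and if y_T ≤ −ρ h_T/8 then the ball of radius ρ h_T/8 centered at (x_T', y_T − ρ h_T/2) is contained in B ∩ T⁻. -/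
open Metric

/-!
`T ⊂ ℝ²` (Euclidean plane) is a bounded set of diameter `h_T`, star-shaped with
respect to the closed ball `B = B((x_T', y_T), ρ h_T) ⊆ T`, and cut by the
x-axis into `T⁺ = T ∩ {y ≥ 0}` and `T⁻ = T ∩ {y ≤ 0}`.
-/

lemma coord_abs_le_dist (p q : EuclideanSpace ℝ (Fin 2)) : |p 1 - q 1| ≤ dist p q := by
  rw [EuclideanSpace.dist_eq, ← Real.sqrt_sq_eq_abs]
  apply Real.sqrt_le_sqrt
  have h := Finset.single_le_sum (f := fun i => dist (p i) (q i) ^ 2)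
    (fun i _ => sq_nonneg _) (Finset.mem_univ 1)
  simpa [Real.dist_eq, sq_abs] using h

/-- If `y_T ≥ −ρh_T/8` then the ball of radius `ρh_T/8`
centered at `(x_T', y_T + ρh_T/2)` is contained in `B ∩ T⁺`, and if
`y_T ≤ −ρh_T/8` then the ball of radius `ρh_T/8` centered at
`(x_T', y_T − ρh_T/2)` is contained in `B ∩ T⁻`; in particular either `T⁺` or
`T⁻` contains a ball of radius `ρh_T/8`. -/
theorem star_shaped_piece_contains_ball
    (T : Set (EuclideanSpace ℝ (Fin 2))) (ρ hT : ℝ) (hρ : 0 < ρ) (hhT : 0 < ρ * hT)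
    (xT : EuclideanSpace ℝ (Fin 2))
    (hdiam : Metric.diam T ≤ hT)
    (hball : closedBall xT (ρ * hT) ⊆ T)
    -- star-shapedness of T with respect to the ball:
    (hstar : ∀ p ∈ T, ∀ z ∈ closedBall xT (ρ * hT), segment ℝ p z ⊆ T) :
    ((-(ρ * hT) / 8 ≤ xT 1 →
        closedBall (xT + (ρ * hT / 2) • (EuclideanSpace.single 1 (1 : ℝ))) (ρ * hT / 8) ⊆
          closedBall xT (ρ * hT) ∩ (T ∩ {p : EuclideanSpace ℝ (Fin 2) | 0 ≤ p 1})) ∧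
      (xT 1 ≤ -(ρ * hT) / 8 →
        closedBall (xT - (ρ * hT / 2) • (EuclideanSpace.single 1 (1 : ℝ))) (ρ * hT / 8) ⊆
          closedBall xT (ρ * hT) ∩ (T ∩ {p : EuclideanSpace ℝ (Fin 2) | p 1 ≤ 0}))) ∧
    ((∃ z, closedBall z (ρ * hT / 8) ⊆ T ∩ {p : EuclideanSpace ℝ (Fin 2) | 0 ≤ p 1}) ∨
      (∃ z, closedBall z (ρ * hT / 8) ⊆ T ∩ {p : EuclideanSpace ℝ (Fin 2) | p 1 ≤ 0})) := by
  set cp := xT + (ρ * hT / 2) • (EuclideanSpace.single 1 (1 : ℝ)) with hcp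
  set cm := xT - (ρ * hT / 2) • (EuclideanSpace.single 1 (1 : ℝ)) with hcm
  have hdistP : dist cp xT = ρ * hT / 2 := by
    rw [hcp, dist_eq_norm, add_sub_cancel_left, norm_smul, EuclideanSpace.norm_single]
    have hT0 : 0 < hT := by nlinarith
    simp [abs_of_pos hρ, abs_of_pos hT0]
  have hdistM : dist cm xT = ρ * hT / 2 := by
    rw [hcm, dist_eq_norm, sub_sub_cancel_left, norm_neg, norm_smul,
      EuclideanSpace.norm_single]
    have hT0 : 0 < hT := by nlinarith
    simp [abs_of_pos hρ, abs_of_pos hT0]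
  have hcoordP : cp 1 = xT 1 + ρ * hT / 2 := by
    rw [hcp]
    simp [EuclideanSpace.single_apply]
  have hcoordM : cm 1 = xT 1 - ρ * hT / 2 := by
    rw [hcm]
    simp [EuclideanSpace.single_apply]
  have hsubBP : closedBall cp (ρ * hT / 8) ⊆ closedBall xT (ρ * hT) := by
    apply closedBall_subset_closedBall'
    rw [hdistP]; linarith
  have hsubBM : closedBall cm (ρ * hT / 8) ⊆ closedBall xT (ρ * hT) := by
    apply closedBall_subset_closedBall'
    rw [hdistM]; linarith
  have hpos : -(ρ * hT) / 8 ≤ xT 1 →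
      closedBall cp (ρ * hT / 8) ⊆
        closedBall xT (ρ * hT) ∩ (T ∩ {p : EuclideanSpace ℝ (Fin 2) | 0 ≤ p 1}) := by
    intro hy p hp
    refine ⟨hsubBP hp, hball (hsubBP hp), ?_⟩
    have h1 : |p 1 - cp 1| ≤ ρ * hT / 8 :=
      (coord_abs_le_dist p cp).trans (mem_closedBall.mp hp)
    have h2 : cp 1 - p 1 ≤ ρ * hT / 8 := by
      have := abs_le.mp h1; linarith [this.1]
    simp only [Set.mem_setOf_eq]
    rw [hcoordP] at h2
    linarith
  have hneg : xT 1 ≤ -(ρ * hT) / 8 →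
      closedBall cm (ρ * hT / 8) ⊆
        closedBall xT (ρ * hT) ∩ (T ∩ {p : EuclideanSpace ℝ (Fin 2) | p 1 ≤ 0}) := by
    intro hy p hp
    refine ⟨hsubBM hp, hball (hsubBM hp), ?_⟩
    have h1 : |p 1 - cm 1| ≤ ρ * hT / 8 :=
      (coord_abs_le_dist p cm).trans (mem_closedBall.mp hp)
    have h2 : p 1 - cm 1 ≤ ρ * hT / 8 := (abs_le.mp h1).2
    simp only [Set.mem_setOf_eq]
    rw [hcoordM] at h2
    linarith
  refine ⟨⟨hpos, hneg⟩, ?_⟩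
  rcases le_total (-(ρ * hT) / 8) (xT 1) with h | h
  · exact Or.inl ⟨cp, fun p hp => (hpos h hp).2⟩
  · exact Or.inr ⟨cm, fun p hp => (hneg h hp).2⟩
end

section
/- Let e be an edge of an interface element T with |e| ≤ h_T and |T| ≥ c₀ h_T² for some c₀ > 0, and let β̄ be the piecewise constant coefficient with values in [β_*, β^*] ⊂ (0, ∞). Then there is a constant C, depending only on c₀, β_*, β^*, such that for every broken linear function q = a φ₁ + b φ₂ + c φ₃ on T one has ‖β̄ ∇q‖_{L²(e)} ≤ C h_T^{−1/2} ‖β̄^{1/2} ∇q‖_{L²(T)}. -/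
/-!
Since `t ⊥ n`, the two integrands are explicit in `β̄`: `|β̄∇q|² = β̄²b² + c²` and
`β̄|∇q|² = β̄b² + c²/β̄`. So on the edge the first is at most `β^*²b² + c²`, on the element the
second is at least `β_*b² + c²/β^*`, and these two constants differ by a factor at most
`β^*²/β_*`. Integrating, the edge integral is at most `h_T` times the first constant, the element
integral at least `c₀h_T²` times the second, which gives `C = (β^*²/(β_* c₀))^{1/2}`.
-/

open MeasureTheory Metric
open scoped RealInnerProductSpace ENNReal

lemma norm_smul_add_smul_sq_of_orthonormal {E : Type*} [NormedAddCommGroup E]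
    [InnerProductSpace ℝ E] {t n : E} (ht : ‖t‖ = 1) (hn : ‖n‖ = 1) (htn : ⟪t, n⟫ = 0)
    (p q : ℝ) : ‖p • t + q • n‖ ^ 2 = p ^ 2 + q ^ 2 := by
  rw [norm_add_sq_real, norm_smul, norm_smul, ht, hn, real_inner_smul_left,
    real_inner_smul_right, htn, Real.norm_eq_abs, Real.norm_eq_abs]
  simp only [mul_one, mul_zero, add_zero, sq_abs]

section BrokenGradient

variable {E : Type*} [NormedAddCommGroup E] [InnerProductSpace ℝ E] {t n : E}
  {b c β βs βS : ℝ}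

lemma norm_smul_brokenGrad_sq (ht : ‖t‖ = 1) (hn : ‖n‖ = 1) (htn : ⟪t, n⟫ = 0) (hβ : β ≠ 0) :
    ‖β • (b • t + (c * β⁻¹) • n)‖ ^ 2 = β ^ 2 * b ^ 2 + c ^ 2 := by
  rw [norm_smul, mul_pow, norm_smul_add_smul_sq_of_orthonormal ht hn htn, Real.norm_eq_abs,
    sq_abs]
  field_simp

lemma mul_norm_brokenGrad_sq (ht : ‖t‖ = 1) (hn : ‖n‖ = 1) (htn : ⟪t, n⟫ = 0) (hβ : β ≠ 0) :
    β * ‖b • t + (c * β⁻¹) • n‖ ^ 2 = β * b ^ 2 + c ^ 2 / β := by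
  rw [norm_smul_add_smul_sq_of_orthonormal ht hn htn]
  field_simp

lemma norm_smul_brokenGrad_sq_le (ht : ‖t‖ = 1) (hn : ‖n‖ = 1) (htn : ⟪t, n⟫ = 0)
    (hβs : 0 < βs) (hβ₁ : βs ≤ β) (hβ₂ : β ≤ βS) :
    ‖β • (b • t + (c * β⁻¹) • n)‖ ^ 2 ≤ βS ^ 2 * b ^ 2 + c ^ 2 := by
  rw [norm_smul_brokenGrad_sq ht hn htn (hβs.trans_le hβ₁).ne']
  gcongr
  linarith

lemma mul_norm_brokenGrad_sq_le (ht : ‖t‖ = 1) (hn : ‖n‖ = 1) (htn : ⟪t, n⟫ = 0)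
    (hβs : 0 < βs) (hβ₁ : βs ≤ β) (hβ₂ : β ≤ βS) :
    β * ‖b • t + (c * β⁻¹) • n‖ ^ 2 ≤ βS * b ^ 2 + c ^ 2 / βs := by
  rw [mul_norm_brokenGrad_sq ht hn htn (hβs.trans_le hβ₁).ne']
  gcongr

lemma le_mul_norm_brokenGrad_sq (ht : ‖t‖ = 1) (hn : ‖n‖ = 1) (htn : ⟪t, n⟫ = 0)
    (hβs : 0 < βs) (hβ₁ : βs ≤ β) (hβ₂ : β ≤ βS) :
    βs * b ^ 2 + c ^ 2 / βS ≤ β * ‖b • t + (c * β⁻¹) • n‖ ^ 2 := by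
  have hβ := hβs.trans_le hβ₁
  rw [mul_norm_brokenGrad_sq ht hn htn hβ.ne']
  gcongr

lemma integrableOn_mul_norm_brokenGrad_sq {X : Type*} [MeasurableSpace X] {μ : Measure X}
    {T : Set X} {βb : X → ℝ} (ht : ‖t‖ = 1) (hn : ‖n‖ = 1) (htn : ⟪t, n⟫ = 0)
    (hT : μ T ≠ ∞) (hβm : Measurable βb) (hβs : 0 < βs) (hβ : ∀ x, βs ≤ βb x ∧ βb x ≤ βS) :
    IntegrableOn (fun x => βb x * ‖b • t + (c * (βb x)⁻¹) • n‖ ^ 2) T μ := by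
  have hg : (fun x => βb x * ‖b • t + (c * (βb x)⁻¹) • n‖ ^ 2)
      = fun x => βb x * b ^ 2 + c ^ 2 / βb x :=
    funext fun x => mul_norm_brokenGrad_sq ht hn htn (hβs.trans_le (hβ x).1).ne'
  refine .of_bound hT.lt_top ?_ (βS * b ^ 2 + c ^ 2 / βs) (ae_of_all _ fun x => ?_)
  · rw [hg]
    exact (by fun_prop : Measurable _).aestronglyMeasurable
  · have hβx := hβs.trans_le (hβ x).1
    rw [Real.norm_of_nonneg (by positivity)]
    exact mul_norm_brokenGrad_sq_le ht hn htn hβs (hβ x).1 (hβ x).2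

end BrokenGradient

lemma sq_mul_sq_add_sq_le_sq_div_mul {βs βS : ℝ} (hβs : 0 < βs) (hβsS : βs ≤ βS) (b c : ℝ) :
    βS ^ 2 * b ^ 2 + c ^ 2 ≤ βS ^ 2 / βs * (βs * b ^ 2 + c ^ 2 / βS) := by
  have hβS := hβs.trans_le hβsS
  have hc : c ^ 2 ≤ βS / βs * c ^ 2 :=
    le_mul_of_one_le_left (sq_nonneg c) ((one_le_div hβs).2 hβsS)
  calc βS ^ 2 * b ^ 2 + c ^ 2 ≤ βS ^ 2 * b ^ 2 + βS / βs * c ^ 2 := by gcongr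
    _ = βS ^ 2 / βs * (βs * b ^ 2 + c ^ 2 / βS) := by field_simp

lemma setIntegral_le_mul_inv_mul_setIntegral_of_bounds {X Y : Type*} [MeasurableSpace X]
    [MeasurableSpace Y] {μ : Measure X} {ν : Measure Y} {e : Set X} {T : Set Y}
    {f : X → ℝ} {g : Y → ℝ} {A B M c₀ h : ℝ} (hT : MeasurableSet T)
    (hg : IntegrableOn g T ν) (hf₀ : ∀ x ∈ e, 0 ≤ f x) (hfA : ∀ x ∈ e, f x ≤ A)
    (hgB : ∀ y ∈ T, B ≤ g y) (hAB : A ≤ M * B) (hB : 0 ≤ B) (hM : 0 ≤ M) (hc₀ : 0 < c₀)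
    (hh : 0 < h) (he : μ e ≤ ENNReal.ofReal h) (hTvol : c₀ * h ^ 2 ≤ ν.real T) :
    ∫ x in e, f x ∂μ ≤ M / c₀ * h⁻¹ * ∫ y in T, g y ∂ν := by
  have he_fin : μ e < ∞ := he.trans_lt ENNReal.ofReal_lt_top
  have hT_fin : ν T ≠ ∞ :=
    (ENNReal.toReal_ne_zero.mp ((by positivity : 0 < c₀ * h ^ 2).trans_le hTvol).ne').2
  have he_len : μ.real e ≤ h := ENNReal.toReal_le_of_le_ofReal hh.le he
  have hf_norm : ∀ x ∈ e, ‖f x‖ ≤ A := fun x hx => by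
    rw [Real.norm_of_nonneg (hf₀ x hx)]
    exact hfA x hx
  calc ∫ x in e, f x ∂μ ≤ A * μ.real e :=
        (Real.le_norm_self _).trans (norm_setIntegral_le_of_norm_le_const he_fin hf_norm)
    _ ≤ M * B * μ.real e := by gcongr
    _ ≤ M * B * h := by gcongr
    _ = M / c₀ * h⁻¹ * (B * (c₀ * h ^ 2)) := by field_simp
    _ ≤ M / c₀ * h⁻¹ * (B * ν.real T) := by gcongr
    _ ≤ M / c₀ * h⁻¹ * ∫ y in T, g y ∂ν := by
        gcongr
        exact setIntegral_ge_of_const_le_real hT hT_fin hgB hg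

lemma sqrt_le_sqrt_mul_rpow_neg_half_mul_sqrt {x y K h : ℝ} (hK : 0 ≤ K) (hh : 0 < h)
    (hxy : x ≤ K * h⁻¹ * y) : √x ≤ √K * h ^ (-(1 : ℝ) / 2) * √y := by
  have hh_pow : h ^ (-(1 : ℝ) / 2) = √h⁻¹ := by
    rw [neg_div, Real.rpow_neg hh.le, ← Real.sqrt_eq_rpow, Real.sqrt_inv]
  calc √x ≤ √(K * h⁻¹ * y) := Real.sqrt_le_sqrt hxy
    _ = √K * h ^ (-(1 : ℝ) / 2) * √y := by
        rw [Real.sqrt_mul (by positivity), Real.sqrt_mul hK, hh_pow]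

/-- There is a constant `C > 0` depending only on
`c₀, β_*, β^*` such that for every broken linear function `q` on `T`,
`‖βb ∇q‖_{L²(e)} ≤ C h_T^{-1/2} ‖βb^{1/2} ∇q‖_{L²(T)}`. -/
theorem broken_trace_inequality (c₀ βs βS : ℝ) (hc₀ : 0 < c₀)
    (hβs : 0 < βs) (hβsS : βs ≤ βS) :
    ∃ C > 0, ∀ (hT : ℝ) (T e : Set (EuclideanSpace ℝ (Fin 2)))
      (βb : EuclideanSpace ℝ (Fin 2) → ℝ) (n t : EuclideanSpace ℝ (Fin 2))
      (a b c : ℝ),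
      0 < hT →
      MeasurableSet T → MeasurableSet e → Measurable βb →
      (∀ x, βs ≤ βb x ∧ βb x ≤ βS) →
      ‖n‖ = 1 → ‖t‖ = 1 → ⟪t, n⟫ = 0 →
      -- the edge has length at most h_T:
      μH[1] e ≤ ENNReal.ofReal hT →
      -- the element is not degenerate: |T| ≥ c₀ h_T²:
      c₀ * hT ^ 2 ≤ (volume T).toReal →
      Real.sqrt (∫ x in e, ‖(βb x) • (b • t + (c * (βb x)⁻¹) • n)‖ ^ 2 ∂μH[1]) ≤
        C * hT ^ (-(1 : ℝ) / 2) *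
          Real.sqrt (∫ x in T, βb x * ‖b • t + (c * (βb x)⁻¹) • n‖ ^ 2) := by
  have hβS : 0 < βS := hβs.trans_le hβsS
  refine ⟨√(βS ^ 2 / βs / c₀), by positivity, ?_⟩
  intro hT T e βb n t _ b c hhT hTm _ hβm hβ hn ht htn he hTvol
  have hT_fin : volume T ≠ ∞ :=
    (ENNReal.toReal_ne_zero.mp ((by positivity : 0 < c₀ * hT ^ 2).trans_le hTvol).ne').2
  refine sqrt_le_sqrt_mul_rpow_neg_half_mul_sqrt (by positivity) hhT ?_
  exact setIntegral_le_mul_inv_mul_setIntegral_of_bounds hTm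
    (integrableOn_mul_norm_brokenGrad_sq ht hn htn hT_fin hβm hβs hβ)
    (fun x _ => by positivity)
    (fun x _ => norm_smul_brokenGrad_sq_le ht hn htn hβs (hβ x).1 (hβ x).2)
    (fun x _ => le_mul_norm_brokenGrad_sq ht hn htn hβs (hβ x).1 (hβ x).2)
    (sq_mul_sq_add_sq_le_sq_div_mul hβs hβsS b c) (by positivity) (by positivity) hc₀ hhT he
    hTvol
end

section
/- Suppose the piece T⁺ of an interface element T (of diameter h_T) contains a ball B⁺ of radius ρ h_T/8, and suppose the inverse inequality |p|_{H¹(B)} ≤ C_inv h_T⁻¹ ‖p‖_{L²(B)} holds for linear polynomials p on balls B of radius ρ h_T/8. Then there exists a constant C depending only on ρ, β_*, β^* such that every broken linear function q on T satisfies |q|_{H¹(T)} ≤ C h_T⁻¹ ‖q‖_{L²(T)}, where |q|_{H¹(T)} denotes the L²-norm of the piecewise gradient. -/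
open MeasureTheory Metric
open scoped RealInnerProductSpace

/-!
On the ball `B⁺ ⊆ T⁺` the broken function is an affine polynomial with gradient
`v = b t + c β⁺⁻¹ n`, so the assumed inverse inequality bounds `|v| |B⁺|^{1/2}` by
`C_inv h_T⁻¹ ‖q‖_{L²(B⁺)} ≤ C_inv h_T⁻¹ ‖q‖_{L²(T)}`. Since `t ⊥ n`, changing the
coefficient `β⁺` of the normal component to any other `β ∈ [β_*, β^*]` enlarges the
gradient by at most the contrast `β^*/β_*`, and `|T| ≤ (8/ρ)² |B⁺|` because `T` lies in a
ball of radius `h_T` around the centre of `B⁺`. Hence `C = (β^*/β_*) (8/ρ) C_inv`.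
-/

theorem norm_add_smul_le_mul_norm_add_smul_of_inner_eq_zero {E : Type*} [NormedAddCommGroup E]
    [InnerProductSpace ℝ E] {u w : E} (huw : ⟪u, w⟫ = 0) {K α β : ℝ} (hK : 1 ≤ K)
    (hαβ : |α| ≤ K * |β|) :
    ‖u + α • w‖ ≤ K * ‖u + β • w‖ := by
  have pythagoras (γ : ℝ) : ‖u + γ • w‖ ^ 2 = ‖u‖ ^ 2 + γ ^ 2 * ‖w‖ ^ 2 := by
    rw [sq, norm_add_sq_eq_norm_sq_add_norm_sq_real (by rw [real_inner_smul_right, huw, mul_zero]),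
      norm_smul, Real.norm_eq_abs]
    nlinarith [sq_abs γ]
  have hα : α ^ 2 ≤ K ^ 2 * β ^ 2 := by
    rw [← sq_abs α, ← sq_abs β, ← mul_pow]
    exact pow_le_pow_left₀ (abs_nonneg α) hαβ 2
  refine le_of_pow_le_pow_left₀ two_ne_zero (by positivity) ?_
  rw [mul_pow, pythagoras, pythagoras]
  nlinarith [sq_nonneg ‖u‖, sq_nonneg ‖w‖, one_le_pow₀ (n := 2) hK]

theorem abs_mul_inv_le_div_mul_abs_mul_inv {βs βS β β' : ℝ} (hβs : 0 < βs) (hβ : βs ≤ β)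
    (hβ' : 0 < β') (hβ'S : β' ≤ βS) (c : ℝ) :
    |c * β⁻¹| ≤ βS / βs * |c * β'⁻¹| := by
  have hβS : 0 < βS := hβ'.trans_le hβ'S
  rw [abs_mul, abs_mul, abs_inv, abs_inv, abs_of_pos (hβs.trans_le hβ), abs_of_pos hβ']
  calc |c| * β⁻¹ ≤ |c| * βs⁻¹ := by gcongr
    _ = βS / βs * (|c| * βS⁻¹) := by field_simp
    _ ≤ βS / βs * (|c| * β'⁻¹) := by gcongr

theorem measureReal_le_of_diam_le {E : Type*} [NormedAddCommGroup E] [NormedSpace ℝ E]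
    [MeasurableSpace E] [BorelSpace E] [FiniteDimensional ℝ E] (μ : Measure E)
    [μ.IsAddHaarMeasure] {s : Set E} {x : E} {R : ℝ} (hs : Bornology.IsBounded s) (hx : x ∈ s)
    (hR : diam s ≤ R) (y : E) {r : ℝ} (hr : 0 < r) :
    μ.real s ≤ (R / r) ^ Module.finrank ℝ E * μ.real (closedBall y r) := by
  have hsR : s ⊆ closedBall x R := fun x' hx' =>
    mem_closedBall.2 ((dist_le_diam_of_mem hs hx' hx).trans hR)
  have hR₀ : 0 ≤ R := diam_nonneg.trans hR
  calc μ.real s ≤ μ.real (closedBall x R) := measureReal_mono hsR measure_closedBall_lt_top.ne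
    _ = (R / r) ^ Module.finrank ℝ E * μ.real (closedBall y r) := by
      rw [Measure.addHaar_real_closedBall' μ x hR₀, Measure.addHaar_real_closedBall' μ y hr.le,
        ← mul_assoc, ← mul_pow, div_mul_cancel₀ R hr.ne']

theorem sqrt_setIntegral_norm_sq_le {α E : Type*} [MeasurableSpace α] {μ : Measure α}
    [NormedAddCommGroup E] {f : α → E} {w : E} {s t : Set α} {K L : ℝ} (hs : μ s < ⊤)
    (hK : 0 ≤ K) (hL : 0 ≤ L) (hf : ∀ x ∈ s, ‖f x‖ ≤ K * ‖w‖)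
    (hst : μ.real s ≤ L ^ 2 * μ.real t) :
    √(∫ x in s, ‖f x‖ ^ 2 ∂μ) ≤ K * L * √(∫ _ in t, ‖w‖ ^ 2 ∂μ) := by
  have hint : ∫ x in s, ‖f x‖ ^ 2 ∂μ ≤ (K * L) ^ 2 * ∫ _ in t, ‖w‖ ^ 2 ∂μ :=
    calc ∫ x in s, ‖f x‖ ^ 2 ∂μ ≤ (K * ‖w‖) ^ 2 * μ.real s := by
          refine (Real.le_norm_self _).trans
            (norm_setIntegral_le_of_norm_le_const hs fun x hx => ?_)
          rw [Real.norm_eq_abs, abs_of_nonneg (by positivity)]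
          exact pow_le_pow_left₀ (norm_nonneg _) (hf x hx) 2
      _ ≤ (K * ‖w‖) ^ 2 * (L ^ 2 * μ.real t) := by gcongr
      _ = (K * L) ^ 2 * ∫ _ in t, ‖w‖ ^ 2 ∂μ := by
          rw [setIntegral_const, smul_eq_mul]
          ring
  rw [← Real.sqrt_sq (by positivity : 0 ≤ K * L), ← Real.sqrt_mul (sq_nonneg _)]
  exact Real.sqrt_le_sqrt hint

theorem integrableOn_sq_add_inner_sub {E : Type*} [NormedAddCommGroup E] [InnerProductSpace ℝ E]
    [MeasurableSpace E] [BorelSpace E] [SecondCountableTopology E] {μ : Measure E} {s : Set E}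
    {g : E → E} {M : ℝ} (hs : Bornology.IsBounded s) (hμs : μ s ≠ ⊤) (hsm : MeasurableSet s)
    (hg : Measurable g) (hgM : ∀ x ∈ s, ‖g x‖ ≤ M) (a : ℝ) (x₀ : E) :
    IntegrableOn (fun x => (a + ⟪x - x₀, g x⟫) ^ 2) s μ := by
  obtain ⟨R, hR⟩ := hs.subset_closedBall x₀
  refine Measure.integrableOn_of_bounded (M := (|a| + R * M) ^ 2) hμs (by fun_prop) ?_
  refine (ae_restrict_iff' hsm).2 (Filter.Eventually.of_forall fun x hx => ?_)
  have hxR : ‖x - x₀‖ ≤ R := mem_closedBall_iff_norm.1 (hR hx)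
  have hinner : |⟪x - x₀, g x⟫| ≤ R * M :=
    (abs_real_inner_le_norm _ _).trans
      (mul_le_mul hxR (hgM x hx) (norm_nonneg _) ((norm_nonneg _).trans hxR))
  rw [Real.norm_eq_abs, abs_pow]
  exact pow_le_pow_left₀ (abs_nonneg _) ((abs_add_le _ _).trans (by linarith)) 2

/-- If `T⁺` contains a ball `B⁺` of radius `ρh_T/8` and the
inverse inequality `|p|_{H¹(B)} ≤ C_inv h_T⁻¹ ‖p‖_{L²(B)}` holds for affine
polynomials `p` on balls `B` of radius `ρh_T/8`, then there is a constant `C`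
depending only on `ρ, β_*, β^*` (and `C_inv`) such that every broken linear
function `q` on `T` satisfies `|q|_{H¹(T)} ≤ C h_T⁻¹ ‖q‖_{L²(T)}`. -/
theorem broken_inverse_inequality (ρ βs βS Cinv : ℝ) (hρ : 0 < ρ)
    (hβs : 0 < βs) (hβsS : βs ≤ βS) (hCinv : 0 < Cinv) :
    ∃ C > 0, ∀ (hT : ℝ) (Tp Tm : Set (EuclideanSpace ℝ (Fin 2)))
      (z n t x₀ : EuclideanSpace ℝ (Fin 2))
      (βb : EuclideanSpace ℝ (Fin 2) → ℝ) (βp βm a b c : ℝ),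
      0 < hT →
      MeasurableSet Tp → MeasurableSet Tm → Measurable βb →
      Bornology.IsBounded (Tp ∪ Tm) → Metric.diam (Tp ∪ Tm) ≤ hT →
      ‖n‖ = 1 → ‖t‖ = 1 → ⟪t, n⟫ = 0 →
      βs ≤ βp → βp ≤ βS → βs ≤ βm → βm ≤ βS →
      (∀ x ∈ Tp, βb x = βp) → (∀ x ∈ Tm, βb x = βm) →
      (∀ x, βs ≤ βb x ∧ βb x ≤ βS) →
      -- T⁺ contains a ball of radius ρ h_T / 8:
      closedBall z (ρ * hT / 8) ⊆ Tp →
      -- inverse inequality for affine polynomials on balls of radius ρ h_T / 8: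
      (∀ (z' : EuclideanSpace ℝ (Fin 2)) (a' : ℝ) (v : EuclideanSpace ℝ (Fin 2)),
        Real.sqrt (∫ _x in closedBall z' (ρ * hT / 8), ‖v‖ ^ 2) ≤
          Cinv * hT⁻¹ *
            Real.sqrt (∫ x in closedBall z' (ρ * hT / 8), (a' + ⟪x - z', v⟫) ^ 2)) →
      -- conclusion: |q|_{H¹(T)} ≤ C h_T⁻¹ ‖q‖_{L²(T)} for the broken linear q:
      Real.sqrt (∫ x in Tp ∪ Tm, ‖b • t + (c * (βb x)⁻¹) • n‖ ^ 2) ≤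
        C * hT⁻¹ *
          Real.sqrt (∫ x in Tp ∪ Tm,
            (a + b * ⟪x - x₀, t⟫ + c * (βb x)⁻¹ * ⟪x - x₀, n⟫) ^ 2) := by
  have hβS : 0 < βS := hβs.trans_le hβsS
  refine ⟨βS / βs * (8 / ρ) * Cinv, by positivity, ?_⟩
  intro hT Tp Tm z n t x₀ βb βp βm a b c hhT hTpm hTmm hβb hbdd hdiam _ _ htn
    hβp1 hβp2 _ _ hβbp _ hβbr hball hinv
  set g : EuclideanSpace ℝ (Fin 2) → EuclideanSpace ℝ (Fin 2) :=
    fun x => b • t + (c * (βb x)⁻¹) • n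
  set v := b • t + (c * βp⁻¹) • n
  set B := closedBall z (ρ * hT / 8)
  have hq (x) : a + b * ⟪x - x₀, t⟫ + c * (βb x)⁻¹ * ⟪x - x₀, n⟫ = a + ⟪x - x₀, g x⟫ := by
    simp only [g, inner_add_right, real_inner_smul_right]
    ring
  have hgv (x) : ‖g x‖ ≤ βS / βs * ‖v‖ :=
    norm_add_smul_le_mul_norm_add_smul_of_inner_eq_zero
      (by rw [real_inner_smul_left, htn, mul_zero]) ((one_le_div hβs).2 hβsS)
      (abs_mul_inv_le_div_mul_abs_mul_inv hβs (hβbr x).1 (hβs.trans_le hβp1) hβp2 c)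
  have hvol : volume.real (Tp ∪ Tm) ≤ (8 / ρ) ^ 2 * volume.real B := by
    have := measureReal_le_of_diam_le volume hbdd
      (Or.inl (hball (mem_closedBall_self (by positivity)))) hdiam z
      (show 0 < ρ * hT / 8 by positivity)
    rwa [finrank_euclideanSpace_fin, show hT / (ρ * hT / 8) = 8 / ρ by field_simp] at this
  have hqB : ∫ x in B, (a + ⟪x - x₀, g x⟫) ^ 2 = ∫ x in B, (a + ⟪z - x₀, v⟫ + ⟪x - z, v⟫) ^ 2 :=
    setIntegral_congr_fun measurableSet_closedBall fun x hx => by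
      simp only [g, hβbp x (hball hx)]
      rw [add_assoc, ← inner_add_left, sub_add_sub_cancel']
  have hqT : ∫ x in B, (a + ⟪x - x₀, g x⟫) ^ 2 ≤ ∫ x in Tp ∪ Tm, (a + ⟪x - x₀, g x⟫) ^ 2 :=
    setIntegral_mono_set
      (integrableOn_sq_add_inner_sub hbdd hbdd.measure_lt_top.ne (hTpm.union hTmm)
        (by fun_prop) (fun x _ => hgv x) a x₀)
      (ae_of_all _ fun x => sq_nonneg _) (hball.trans Set.subset_union_left).eventuallyLE
  simp only [hq]
  calc √(∫ x in Tp ∪ Tm, ‖g x‖ ^ 2) ≤ βS / βs * (8 / ρ) * √(∫ _ in B, ‖v‖ ^ 2) :=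
        sqrt_setIntegral_norm_sq_le hbdd.measure_lt_top (by positivity)
          (by positivity) (fun x _ => hgv x) hvol
    _ ≤ βS / βs * (8 / ρ) * (Cinv * hT⁻¹ * √(∫ x in B, (a + ⟪z - x₀, v⟫ + ⟪x - z, v⟫) ^ 2)) := by
        gcongr
        exact hinv z _ v
    _ ≤ βS / βs * (8 / ρ) * (Cinv * hT⁻¹ * √(∫ x in Tp ∪ Tm, (a + ⟪x - x₀, g x⟫) ^ 2)) := by
        rw [← hqB]
        gcongr
    _ = βS / βs * (8 / ρ) * Cinv * hT⁻¹ * √(∫ x in Tp ∪ Tm, (a + ⟪x - x₀, g x⟫) ^ 2) := by ring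
end
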